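/- (Closed Completeness) Every closed and valid formula is deducible: if s is a formula with no free variables and every standard interpretation satisfies s, then ∅ ⊢ s. -/

import Mathlib

namespace PTT


/-- Simple types over a single base type `B`. -/
inductive Ty : Type
  | base : Ty
  | arrow : Ty → Ty → Ty
deriving DecidableEq

/-- Names: the constants `⊥` and `→`, and variables (an index together with a type). -/
inductive Name : Type
  | bot : Name
  | imp : Name
  | var : ℕ → Ty → Name
deriving DecidableEq

/-- The type of a name. -/
def Name.ty : Name → Ty
  | .bot => .base
  | .imp => .arrow .base (.arrow .base .base)
  | .var _ σ => σ

/-- Terms: names, abstraction over a variable, application. -/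
inductive Tm : Type
  | name : Name → Tm
  | lam : ℕ → Ty → Tm → Tm
  | app : Tm → Tm → Tm
deriving DecidableEq

/-- The term `⊥`. -/
def botTm : Tm := .name .bot

/-- The variable `(n, σ)` as a term. -/
def vr (n : ℕ) (σ : Ty) : Tm := .name (.var n σ)

/-- Implication `s → t`. -/
def impTm (s t : Tm) : Tm := .app (.app (.name .imp) s) t

/-- `⊤ := ⊥ → ⊥`. -/
def topTm : Tm := impTm botTm botTm

/-- `¬ s := s → ⊥`. -/
def negTm (s : Tm) : Tm := impTm s botTm

/-- `s ∨ t := (s → t) → t`. -/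
def orTm (s t : Tm) : Tm := impTm (impTm s t) t

/-- `s ∧ t := ¬(¬s ∨ ¬t)`. -/
def andTm (s t : Tm) : Tm := negTm (orTm (negTm s) (negTm t))

/-- `s ≡ t := (s → t) ∧ (t → s)`. -/
def equivTm (s t : Tm) : Tm := andTm (impTm s t) (impTm t s)

/-- The typing relation. -/
inductive HasTy : Tm → Ty → Prop
  | name (x : Name) : HasTy (.name x) x.ty
  | lam {n σ s τ} : HasTy s τ → HasTy (.lam n σ s) (.arrow σ τ)
  | app {s t σ τ} : HasTy s (.arrow σ τ) → HasTy t σ → HasTy (.app s t) τ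

/-- Free variables of a term. -/
def fv : Tm → Finset (ℕ × Ty)
  | .name (.var n σ) => {(n, σ)}
  | .name _ => ∅
  | .lam n σ s => (fv s).erase (n, σ)
  | .app s t => fv s ∪ fv t

/-- A term is closed if it has no free variables. -/
def Closed (s : Tm) : Prop := fv s = ∅

/-- Capture-free parallel substitution (bound variables are renamed). -/
def substAux (ρ : ℕ × Ty → Tm) : Tm → Tm
  | .name (.var n σ) => ρ (n, σ)
  | .name x => .name x
  | .app s t => .app (substAux ρ s) (substAux ρ t)
  | .lam n σ s =>
      let used : Finset ℕ :=
        ((fv s).erase (n, σ)).biUnion (fun p => (fv (ρ p)).image Prod.fst)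
      let m : ℕ := used.sup id + 1
      .lam m σ (substAux (Function.update ρ (n, σ) (vr m σ)) s)

/-- Capture-free substitution `s[(n,σ) := t]`. -/
def subst (s : Tm) (n : ℕ) (σ : Ty) (t : Tm) : Tm :=
  substAux (Function.update (fun p => vr p.1 p.2) (n, σ) t) s

/-- Contexts: terms with exactly one hole (possibly under binders). -/
inductive Ctx : Type
  | hole : Ctx
  | lam : ℕ → Ty → Ctx → Ctx
  | appL : Ctx → Tm → Ctx
  | appR : Tm → Ctx → Ctx

/-- Filling the hole of a context with a term (capturing is allowed). -/
def Ctx.fill : Ctx → Tm → Tm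
  | .hole, s => s
  | .lam n σ C, s => .lam n σ (C.fill s)
  | .appL C t, s => .app (C.fill s) t
  | .appR t C, s => .app t (C.fill s)

/-- `C` captures the variable `p` if the hole of `C` lies below a binder for `p`. -/
def Ctx.captures : Ctx → ℕ × Ty → Prop
  | .hole, _ => False
  | .lam n σ C, p => p = (n, σ) ∨ C.captures p
  | .appL C _, p => C.captures p
  | .appR _ C, p => C.captures p

/-- `C` is admissible for `A` if it captures no variable free in `A`. -/
def Ctx.Admissible (C : Ctx) (A : Finset Tm) : Prop :=
  ∀ p ∈ A.biUnion fv, ¬ C.captures p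

/-- `s` is a subterm of `t`. -/
def Subterm (s t : Tm) : Prop := ∃ C : Ctx, C.fill s = t

/-- β-redexes. -/
def IsBetaRedex : Tm → Prop
  | .app (.lam _ _ _) _ => True
  | _ => False

/-- A term is β-normal if none of its subterms is a β-redex. -/
def BetaNormal (t : Tm) : Prop := ∀ s, Subterm s t → ¬ IsBetaRedex s

/-- Lambda equivalence: the least equivalence on well-typed terms containing
α-, β-, η-conversion and closed under arbitrary contexts. -/
inductive LamEq : Tm → Tm → Prop
  | refl {s σ} : HasTy s σ → LamEq s s
  | symm {s t} : LamEq s t → LamEq t s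
  | trans {s t u} : LamEq s t → LamEq t u → LamEq s u
  | alpha {n m σ s τ} : HasTy (.lam n σ s) τ → (m, σ) ∉ fv s →
      LamEq (.lam n σ s) (.lam m σ (subst s n σ (vr m σ)))
  | beta {n σ s t τ} : HasTy (.app (.lam n σ s) t) τ →
      LamEq (.app (.lam n σ s) t) (subst s n σ t)
  | eta {n σ s τ} : HasTy (.lam n σ (.app s (vr n σ))) τ → (n, σ) ∉ fv s →
      LamEq (.lam n σ (.app s (vr n σ))) s
  | ctx {s t σ} (C : Ctx) : LamEq s t → HasTy (C.fill s) σ → LamEq (C.fill s) (C.fill t)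

/-- The standard set-theoretic interpretation of types: `B` is interpreted as the
two truth values (`Bool`), functional types as full function spaces. -/
def Ty.sem : Ty → Type
  | .base => Bool
  | .arrow σ τ => σ.sem → τ.sem

def Ty.semDefault : (σ : Ty) → σ.sem
  | .base => false
  | .arrow _ τ => fun _ => τ.semDefault

instance (σ : Ty) : Inhabited σ.sem := ⟨σ.semDefault⟩

noncomputable instance Ty.semFintype : (σ : Ty) → Fintype σ.sem
  | .base => inferInstanceAs (Fintype Bool)
  | .arrow σ τ =>
      letI := Ty.semFintype σ
      letI := Ty.semFintype τ
      letI := Classical.decEq σ.sem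
      inferInstanceAs (Fintype (σ.sem → τ.sem))

def Ty.semCast {σ τ : Ty} (h : σ = τ) (v : σ.sem) : τ.sem := h ▸ v

/-- An interpretation assigns to every variable a value of the corresponding type
(the constants `⊥` and `→` have their values fixed). -/
def Interp : Type := ℕ → (σ : Ty) → σ.sem

def Interp.update (I : Interp) (n : ℕ) (σ : Ty) (v : σ.sem) : Interp :=
  fun m τ => if h : m = n ∧ τ = σ then Ty.semCast h.2.symm v else I m τ

/-- Type inference. -/
def typeOf : Tm → Option Ty
  | .name x => some x.ty
  | .lam _ σ s => (typeOf s).map (Ty.arrow σ)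
  | .app s t =>
      match typeOf s, typeOf t with
      | some (.arrow σ τ), some σ' => if σ = σ' then some τ else none
      | _, _ => none

/-- The canonical extension `Î` of an interpretation to all terms: `eval I s σ`
is the value of `s` at type `σ` (on well-typed terms this is the usual
denotation; junk default values are used at type mismatches). -/
def eval (I : Interp) : Tm → (σ : Ty) → σ.sem
  | .name (.var n τ), σ => if h : τ = σ then Ty.semCast h (I n τ) else default
  | .name .bot, σ =>
      match σ with
      | .base => false
      | _ => default
  | .name .imp, σ =>
      match σ with
      | .arrow .base (.arrow .base .base) => fun a b => !a || b
      | _ => default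
  | .app s t, σ =>
      match typeOf t with
      | some τ => eval I s (.arrow τ σ) (eval I t τ)
      | none => default
  | .lam n τ s, σ =>
      match σ with
      | .base => default
      | .arrow σ₁ σ₂ =>
          if h : σ₁ = τ then
            fun a => eval (I.update n τ (Ty.semCast h a)) s σ₂
          else default

/-- `I` satisfies the formula `s` if `Î s = 1`. -/
def Satisfies (I : Interp) (s : Tm) : Prop := eval I s .base = true

/-- A formula is valid if every interpretation satisfies it. -/
def ValidFml (s : Tm) : Prop := ∀ I : Interp, Satisfies I s

/-- A sequent `A ⇒ s` is valid if every interpretation satisfying `A` satisfies `s`. -/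
def ValidSeq (A : Finset Tm) (s : Tm) : Prop :=
  ∀ I : Interp, (∀ t ∈ A, Satisfies I t) → Satisfies I s

/-- Finite disjunction (the empty disjunction is `⊥`). -/
def orList : List Tm → Tm
  | [] => botTm
  | [s] => s
  | s :: l => orTm s (orList l)

/-- Finite conjunction (the empty conjunction is `⊤`). -/
def andList : List Tm → Tm
  | [] => topTm
  | [s] => s
  | s :: l => andTm s (andList l)

/-- The argument types of a type (every type has the form `σ₁…σₙB`). -/
def Ty.args : Ty → List Ty
  | .base => []
  | .arrow σ τ => σ :: τ.args

/-- Tuples of values along a list of types. -/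
def Tup : List Ty → Type
  | [] => PUnit
  | σ :: l => σ.sem × Tup l

noncomputable instance TupFintype : (l : List Ty) → Fintype (Tup l)
  | [] => inferInstanceAs (Fintype PUnit)
  | σ :: l =>
      letI := TupFintype l
      inferInstanceAs (Fintype (σ.sem × Tup l))

/-- Applying a function value to a tuple of arguments (the result type is `B`). -/
def Ty.applyTup : (σ : Ty) → σ.sem → Tup σ.args → Bool
  | .base, a, _ => a
  | .arrow _ τ, f, p => τ.applyTup (f p.1) p.2

/-- Quote/identity data for each type in a list: a quote function and the term `≐`. -/
def ArgData : List Ty → Type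
  | [] => PUnit
  | σ :: l => ((σ.sem → Tm) × Tm) × ArgData l

/-- The conjunction list `x_k ≐_{σ_k} (↓_{σ_k} b_k), …` for a tuple `b`. -/
def eqConj : (l : List Ty) → ArgData l → ℕ → Tup l → List Tm
  | [], _, _, _ => []
  | σ :: l, (d, ds), k, (b, bs) =>
      (.app (.app d.2 (vr k σ)) (d.1 b)) :: eqConj l ds (k + 1) bs

/-- `λ x_k : σ_k. …` binding one variable for each type in the list. -/
def mkLams : (l : List Ty) → ℕ → Tm → Tm
  | [], _, body => body
  | σ :: l, k, body => .lam k σ (mkLams l (k + 1) body)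

/-- The body of the quote term
`↓_{σ₁…σₙB} a := λx₁…xₙ. ⋁_{b₁…bₙ, a b₁…bₙ = 1} ⋀_j x_j ≐_{σ_j} (↓_{σ_j} b_j)`. -/
noncomputable def quoteBodyAux (σ : Ty) (ad : ArgData σ.args) (a : σ.sem) : Tm :=
  mkLams σ.args 0 (orList
    ((((Finset.univ : Finset (Tup σ.args)).toList.filter
        (fun b => σ.applyTup a b))).map
      (fun b => andList (eqConj σ.args ad 0 b))))

/-- `∀σ := λf. ⋀_{a ∈ Bσ} f (↓σ a)`, given the quote function for `σ`. -/
noncomputable def allTmAux (σ : Ty) (q : σ.sem → Tm) : Tm :=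
  .lam 0 (.arrow σ .base)
    (andList (((Finset.univ : Finset σ.sem).toList).map
      (fun a => .app (vr 0 (.arrow σ .base)) (q a))))

mutual
  /-- The quote function `↓σ` together with the identity term `≐σ`. -/
  noncomputable def quoteEq : (σ : Ty) → ((σ.sem → Tm) × Tm)
    | .base =>
        (fun a => quoteBodyAux .base PUnit.unit a,
         .lam 0 .base (.lam 1 .base (equivTm (vr 0 .base) (vr 1 .base))))
    | .arrow σ τ =>
        (fun a => quoteBodyAux (.arrow σ τ) ((quoteEq σ, argData τ) : ArgData (σ :: τ.args)) a,
         .lam 0 (.arrow σ τ) (.lam 1 (.arrow σ τ)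
           (.app (allTmAux σ (quoteEq σ).1)
             (.lam 2 σ
               (.app (.app (quoteEq τ).2
                  (.app (vr 0 (.arrow σ τ)) (vr 2 σ)))
                (.app (vr 1 (.arrow σ τ)) (vr 2 σ)))))))
  /-- Quote/identity data for all argument types of a type. -/
  noncomputable def argData : (σ : Ty) → ArgData σ.args
    | .base => PUnit.unit
    | .arrow σ τ => ((quoteEq σ, argData τ) : ArgData (σ :: τ.args))
end

/-- The quote function `↓σ : Bσ → Λ`. -/
noncomputable def quote (σ : Ty) (a : σ.sem) : Tm := (quoteEq σ).1 a

/-- The term `≐σ : σσB` denoting the identity predicate on `Bσ`. -/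
noncomputable def eqTm (σ : Ty) : Tm := (quoteEq σ).2

/-- The term `∀σ : (σB)B`. -/
noncomputable def allTm (σ : Ty) : Tm := allTmAux σ (quote σ)


/-- Propositional formulas: `s ::= x | ⊥ | s → s` with `x` a variable of type `B`. -/
inductive Propositional : Tm → Prop
  | var (n : ℕ) : Propositional (vr n .base)
  | bot : Propositional botTm
  | imp {s t} : Propositional s → Propositional t → Propositional (impTm s t)

/-- A type-respecting substitution of terms for variables. -/
def IsSubstitution (ρ : ℕ × Ty → Tm) : Prop := ∀ n σ, HasTy (ρ (n, σ)) σ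

/-- A formula is tautologous if it is a substitution instance of a tautology
(a valid propositional formula). -/
def Tautologous (s : Tm) : Prop :=
  ∃ t ρ, Propositional t ∧ ValidFml t ∧ IsSubstitution ρ ∧ s = substAux ρ t

/-- The proof system: Triv, Weak, Ded, MP, DN, Lam and Boolean replacement (BR).
Sequents consist of a finite set of formulas and a formula. -/
inductive Ded : Finset Tm → Tm → Prop
  | triv {A s} : (∀ t ∈ A, HasTy t .base) → HasTy s .base → Ded (insert s A) s
  | weak {A s t} : HasTy s .base → Ded A t → Ded (insert s A) t
  | ded {A s t} : Ded (insert s A) t → Ded A (impTm s t)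
  | mp {A s t} : Ded A (impTm s t) → Ded A s → Ded A t
  | dn {A s} : Ded A (negTm (negTm s)) → Ded A s
  | lam {A s t} : Ded A s → LamEq s t → HasTy t .base → Ded A t
  | br {A s t} (C : Ctx) : C.Admissible A → Ded A (equivTm s t) →
      Ded A (C.fill s) → HasTy (C.fill t) .base → Ded A (C.fill t)

/-!
Tait's method. Call a term `u : σ` a representative of `a ∈ Bσ` if, at type `B`, `u` is
deducible when `a = 1` and refutable when `a = 0`, and, at type `στ`, `u v` represents `a b`
whenever `v` represents `b`. The constants represent their values (`⊥` is refutable, the truth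
table of `→` is derivable with Ded, Weak, MP and DN), and representation is invariant under
λ-equivalence, so an abstraction represents its value by β-reduction. Hence every closing
instance of a well-typed term represents the term's value; a closed valid formula evaluates to
`1`, so it is deducible. Renaming of bound variables is handled by comparing locally nameless
forms: terms with the same locally nameless form are λ-equivalent.
-/

lemma typeOf_eq_some {s : Tm} {σ : Ty} (h : HasTy s σ) : typeOf s = some σ := by
  induction h with
  | name x => rfl
  | app _ _ ihs iht => simp [typeOf, ihs, iht]
  | lam _ ih => simp [typeOf, ih]

def freshIdx (ρ : ℕ × Ty → Tm) (n : ℕ) (σ : Ty) (s : Tm) : ℕ :=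
  (((fv s).erase (n, σ)).biUnion (fun p => (fv (ρ p)).image Prod.fst)).sup id + 1

lemma substAux_lam (ρ : ℕ × Ty → Tm) (n : ℕ) (σ : Ty) (s : Tm) :
    substAux ρ (.lam n σ s) =
      .lam (freshIdx ρ n σ s) σ
        (substAux (Function.update ρ (n, σ) (vr (freshIdx ρ n σ s) σ)) s) := rfl

lemma freshIdx_notMem_fv {ρ : ℕ × Ty → Tm} {n : ℕ} {σ τ : Ty} {s : Tm} {p : ℕ × Ty}
    (hp : p ∈ fv (.lam n σ s)) : (freshIdx ρ n σ s, τ) ∉ fv (ρ p) := fun h =>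
  (Nat.lt_succ_of_le <| Finset.le_sup (f := id) <|
    Finset.mem_biUnion.2 ⟨p, hp, Finset.mem_image_of_mem Prod.fst h⟩).false

lemma hasTy_update {θ : ℕ × Ty → Tm} {S : Finset (ℕ × Ty)} {n : ℕ} {σ : Ty} {w : Tm}
    (hθ : ∀ p ∈ S.erase (n, σ), HasTy (θ p) p.2) (hw : HasTy w σ) :
    ∀ p ∈ S, HasTy (Function.update θ (n, σ) w p) p.2 := by
  intro p hp
  by_cases hpn : p = (n, σ)
  · subst hpn; rw [Function.update_self]; exact hw
  · rw [Function.update_of_ne hpn]; exact hθ p (Finset.mem_erase.2 ⟨hpn, hp⟩)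

lemma hasTy_substAux {s : Tm} {σ : Ty} (h : HasTy s σ) {ρ : ℕ × Ty → Tm}
    (hρ : ∀ p ∈ fv s, HasTy (ρ p) p.2) : HasTy (substAux ρ s) σ := by
  induction h generalizing ρ with
  | name x => cases x <;> first | exact hρ _ (by simp [fv]) | exact HasTy.name _
  | app _ _ ihs iht =>
    exact HasTy.app (ihs fun p hp => hρ p (by simp [fv, hp]))
      (iht fun p hp => hρ p (by simp [fv, hp]))
  | lam _ ih => exact HasTy.lam (ih (hasTy_update hρ (HasTy.name (.var _ _))))

lemma hasTy_subst {s t : Tm} {n : ℕ} {σ τ : Ty} (hs : HasTy s τ) (ht : HasTy t σ) :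
    HasTy (subst s n σ t) τ :=
  hasTy_substAux hs (hasTy_update (fun p _ => HasTy.name (.var p.1 p.2)) ht)

lemma HasTy.unique {s : Tm} {σ τ : Ty} (hσ : HasTy s σ) (hτ : HasTy s τ) : σ = τ :=
  Option.some.inj ((typeOf_eq_some hσ).symm.trans (typeOf_eq_some hτ))

lemma exists_fresh (S : Finset (ℕ × Ty)) (σ : Ty) : ∃ m, (m, σ) ∉ S := by
  obtain ⟨m, hm⟩ := Infinite.exists_notMem_finset (S.image Prod.fst)
  exact ⟨m, fun h => hm (Finset.mem_image_of_mem Prod.fst h)⟩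

inductive DB : Type
  | bvar : ℕ → DB
  | fvar : ℕ × Ty → DB
  | bot : DB
  | imp : DB
  | lam : Ty → DB → DB
  | app : DB → DB → DB

namespace DB

def fv : DB → Finset (ℕ × Ty)
  | .fvar p => {p}
  | .lam _ d => fv d
  | .app d e => fv d ∪ fv e
  | _ => ∅

def subst (f : ℕ × Ty → DB) : DB → DB
  | .fvar p => f p
  | .lam σ d => .lam σ (subst f d)
  | .app d e => .app (subst f d) (subst f e)
  | d => d

lemma subst_congr {f g : ℕ × Ty → DB} {d : DB} (h : ∀ p ∈ fv d, f p = g p) :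
    subst f d = subst g d := by
  induction d with
  | fvar p => exact h p (by simp [fv])
  | lam σ d ih => simp only [subst, ih h]
  | app d e ihd ihe =>
    simp only [subst, ihd fun p hp => h p (by simp [fv, hp]),
      ihe fun p hp => h p (by simp [fv, hp])]
  | _ => rfl

lemma subst_fvar (d : DB) : subst fvar d = d := by
  induction d <;> simp_all [subst]

lemma subst_subst (f g : ℕ × Ty → DB) (d : DB) :
    subst g (subst f d) = subst (fun p => subst g (f p)) d := by
  induction d <;> simp_all [subst]

end DB

lemma idxOf?_cons_self {α : Type*} [BEq α] [LawfulBEq α] (a : α) (l : List α) :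
    (a :: l).idxOf? a = some 0 := by
  simp [List.idxOf?_cons]

lemma idxOf?_cons_of_ne {α : Type*} [BEq α] [LawfulBEq α] {a b : α} (l : List α)
    (h : b ≠ a) : (a :: l).idxOf? b = (l.idxOf? b).map (· + 1) := by
  simp [List.idxOf?_cons, Ne.symm h]

/-- `E` lists the enclosing binders, innermost first; a variable refers to its first occurrence
in `E`. -/
def Tm.toDB (E : List (ℕ × Ty)) : Tm → DB
  | .name (.var n σ) =>
      match E.idxOf? (n, σ) with
      | some i => .bvar i
      | none => .fvar (n, σ)
  | .name .bot => .bot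
  | .name .imp => .imp
  | .lam n σ b => .lam σ (b.toDB ((n, σ) :: E))
  | .app s t => .app (s.toDB E) (t.toDB E)

namespace Tm

lemma toDB_vr_of_notMem {E : List (ℕ × Ty)} {n : ℕ} {σ : Ty} (h : (n, σ) ∉ E) :
    (vr n σ).toDB E = .fvar (n, σ) := by
  simp [vr, toDB, List.idxOf?_eq_none_iff.2 h]

lemma toDB_vr_of_idxOf? {E : List (ℕ × Ty)} {n : ℕ} {σ : Ty} {i : ℕ}
    (h : E.idxOf? (n, σ) = some i) : (vr n σ).toDB E = .bvar i := by
  simp [vr, toDB, h]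

lemma toDB_congr {s : Tm} {E E' : List (ℕ × Ty)} (h : ∀ p ∈ fv s, E.idxOf? p = E'.idxOf? p) :
    s.toDB E = s.toDB E' := by
  induction s generalizing E E' with
  | name x =>
    cases x with
    | var n σ => simp only [toDB, h (n, σ) (by simp [fv])]
    | _ => rfl
  | app s t ihs iht =>
    simp only [toDB, ihs fun p hp => h p (by simp [fv, hp]), iht fun p hp => h p (by simp [fv, hp])]
  | lam n σ b ih =>
    refine congrArg _ (ih fun p hp => ?_)
    by_cases hpn : p = (n, σ)
    · rw [hpn, idxOf?_cons_self, idxOf?_cons_self]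
    · rw [idxOf?_cons_of_ne _ hpn, idxOf?_cons_of_ne _ hpn, h p (Finset.mem_erase.2 ⟨hpn, hp⟩)]

lemma fv_toDB {s : Tm} {E : List (ℕ × Ty)} {p : ℕ × Ty} (hp : p ∈ (s.toDB E).fv) :
    p ∈ fv s ∧ p ∉ E := by
  induction s generalizing E with
  | name x =>
    cases x with
    | var n σ =>
      simp only [toDB] at hp
      split at hp <;> simp_all [DB.fv, fv]
    | _ => simp [toDB, DB.fv] at hp
  | app s t ihs iht =>
    simp only [toDB, DB.fv, Finset.mem_union] at hp
    rcases hp with hp | hp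
    · exact ⟨by simp [fv, (ihs hp).1], (ihs hp).2⟩
    · exact ⟨by simp [fv, (iht hp).1], (iht hp).2⟩
  | lam n σ b ih =>
    obtain ⟨hpb, hpE⟩ := ih hp
    simp only [List.mem_cons, not_or] at hpE
    exact ⟨Finset.mem_erase.2 ⟨hpE.1, hpb⟩, hpE.2⟩

lemma toDB_substAux {s : Tm} {ρ : ℕ × Ty → Tm} {E E' : List (ℕ × Ty)}
    (hbound : ∀ p ∈ fv s, ∀ i, E.idxOf? p = some i →
      ∃ q : ℕ × Ty, ρ p = vr q.1 q.2 ∧ E'.idxOf? q = some i)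
    (hfree : ∀ p ∈ fv s, p ∉ E → ∀ q ∈ fv (ρ p), q ∉ E') :
    (substAux ρ s).toDB E' = (s.toDB E).subst fun p => (ρ p).toDB [] := by
  induction s generalizing ρ E E' with
  | name x =>
    cases x with
    | var n σ =>
      have hmem : (n, σ) ∈ fv (.name (.var n σ)) := by simp [fv]
      show (ρ (n, σ)).toDB E' = _
      cases h : E.idxOf? (n, σ) with
      | some i =>
        obtain ⟨q, hq, hqi⟩ := hbound _ hmem i h
        simp [toDB, h, DB.subst, hq, toDB_vr_of_idxOf? hqi]
      | none =>
        simp only [toDB, h, DB.subst]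
        refine toDB_congr fun q hq => ?_
        simp [hfree _ hmem (List.idxOf?_eq_none_iff.1 h) q hq]
    | _ => rfl
  | app u v ihu ihv =>
    simp only [substAux, toDB, DB.subst]
    rw [ihu (fun p hp => hbound p (by simp [fv, hp])) (fun p hp => hfree p (by simp [fv, hp])),
      ihv (fun p hp => hbound p (by simp [fv, hp])) (fun p hp => hfree p (by simp [fv, hp]))]
  | lam n σ b ih =>
    set m := freshIdx ρ n σ b
    have hfresh : ∀ p ∈ fv b, p ≠ (n, σ) → ∀ q ∈ fv (ρ p), q ≠ (m, σ) :=
      fun p hp hpn q hq hqm => freshIdx_notMem_fv (Finset.mem_erase.2 ⟨hpn, hp⟩) (hqm ▸ hq)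
    rw [substAux_lam]
    simp only [toDB, DB.subst]
    refine congrArg _ ((ih (E := (n, σ) :: E) ?_ ?_).trans (DB.subst_congr fun p hp => ?_))
    · intro p hp i hi
      by_cases hpn : p = (n, σ)
      · subst hpn
        rw [idxOf?_cons_self, Option.some_inj] at hi
        exact ⟨(m, σ), Function.update_self .., hi ▸ idxOf?_cons_self _ _⟩
      · rw [idxOf?_cons_of_ne _ hpn, Option.map_eq_some_iff] at hi
        obtain ⟨j, hj, rfl⟩ := hi
        obtain ⟨q, hq, hqj⟩ := hbound p (Finset.mem_erase.2 ⟨hpn, hp⟩) j hj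
        have hqm := hfresh p hp hpn q (by simp [hq, vr, fv])
        refine ⟨q, by rw [Function.update_of_ne hpn, hq], ?_⟩
        rw [idxOf?_cons_of_ne _ hqm, hqj]
        rfl
    · intro p hp hpE q hq
      simp only [List.mem_cons, not_or] at hpE ⊢
      rw [Function.update_of_ne hpE.1] at hq
      exact ⟨hfresh p hp hpE.1 q hq, hfree p (Finset.mem_erase.2 ⟨hpE.1, hp⟩) hpE.2 q hq⟩
    · have hpn : p ≠ (n, σ) := fun h => (fv_toDB hp).2 (h ▸ List.mem_cons_self)
      rw [Function.update_of_ne hpn]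

lemma toDB_substAux_nil (ρ : ℕ × Ty → Tm) (s : Tm) :
    (substAux ρ s).toDB [] = (s.toDB []).subst fun p => (ρ p).toDB [] :=
  toDB_substAux (by simp) (by simp)

lemma toDB_substAux_vr (s : Tm) : (substAux (fun p => vr p.1 p.2) s).toDB [] = s.toDB [] := by
  rw [toDB_substAux_nil]
  conv_rhs => rw [← DB.subst_fvar (s.toDB [])]
  exact DB.subst_congr fun p _ => toDB_vr_of_notMem (List.not_mem_nil)

lemma toDB_subst_vr {b : Tm} {n m : ℕ} {σ : Ty} {E : List (ℕ × Ty)} (hm : (m, σ) ∉ fv b) :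
    (subst b n σ (vr m σ)).toDB ((m, σ) :: E) = b.toDB ((n, σ) :: E) := by
  have hne : ∀ p ∈ fv b, p ≠ (m, σ) := fun p hp h => hm (h ▸ hp)
  rw [subst, toDB_substAux (E := (n, σ) :: E)]
  · conv_rhs => rw [← DB.subst_fvar (b.toDB _)]
    refine DB.subst_congr fun p hp => ?_
    obtain ⟨-, hpE⟩ := fv_toDB hp
    simp only [List.mem_cons, not_or] at hpE
    rw [Function.update_of_ne hpE.1]
    exact toDB_vr_of_notMem List.not_mem_nil
  · intro p hp i hi
    by_cases hpn : p = (n, σ)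
    · subst hpn
      rw [idxOf?_cons_self, Option.some_inj] at hi
      exact ⟨(m, σ), Function.update_self .., hi ▸ idxOf?_cons_self _ _⟩
    · refine ⟨p, Function.update_of_ne hpn .., ?_⟩
      rwa [idxOf?_cons_of_ne _ hpn, ← idxOf?_cons_of_ne _ (hne p hp)] at hi
  · intro p hp hpE q hq
    simp only [List.mem_cons, not_or] at hpE ⊢
    rw [Function.update_of_ne hpE.1] at hq
    simp only [vr, fv, Finset.mem_singleton] at hq
    exact hq ▸ ⟨hne p hp, hpE.2⟩

lemma eq_vr_of_toDB_eq_bvar {s : Tm} {E : List (ℕ × Ty)} {i : ℕ} (h : s.toDB E = .bvar i) :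
    ∃ p : ℕ × Ty, s = vr p.1 p.2 ∧ E.idxOf? p = some i := by
  rcases s with ((_ | _ | ⟨n, σ⟩) | _ | _) <;> simp only [toDB, reduceCtorEq] at h
  split at h <;> simp_all [vr]

lemma eq_vr_of_toDB_eq_fvar {s : Tm} {E : List (ℕ × Ty)} {p : ℕ × Ty}
    (h : s.toDB E = .fvar p) : s = vr p.1 p.2 := by
  rcases s with ((_ | _ | ⟨n, σ⟩) | _ | _) <;> simp only [toDB, reduceCtorEq] at h
  split at h <;> simp only [reduceCtorEq, DB.fvar.injEq] at h
  simp [vr, ← h]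

lemma eq_bot_of_toDB_eq_bot {s : Tm} {E : List (ℕ × Ty)} (h : s.toDB E = .bot) : s = botTm := by
  rcases s with ((_ | _ | ⟨n, σ⟩) | _ | _) <;> simp only [toDB, reduceCtorEq] at h
  · rfl
  · split at h <;> simp at h

lemma eq_imp_of_toDB_eq_imp {s : Tm} {E : List (ℕ × Ty)} (h : s.toDB E = .imp) :
    s = .name .imp := by
  rcases s with ((_ | _ | ⟨n, σ⟩) | _ | _) <;> simp only [toDB, reduceCtorEq] at h
  · rfl
  · split at h <;> simp at h

lemma eq_lam_of_toDB_eq_lam {s : Tm} {E : List (ℕ × Ty)} {σ : Ty} {d : DB}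
    (h : s.toDB E = .lam σ d) : ∃ n b, s = .lam n σ b ∧ b.toDB ((n, σ) :: E) = d := by
  rcases s with ((_ | _ | ⟨n, σ⟩) | ⟨n, τ, b⟩ | _) <;> simp only [toDB, reduceCtorEq] at h
  · split at h <;> simp at h
  · obtain ⟨rfl, hb⟩ := DB.lam.inj h
    exact ⟨n, b, rfl, hb⟩

lemma eq_app_of_toDB_eq_app {s : Tm} {E : List (ℕ × Ty)} {d e : DB}
    (h : s.toDB E = .app d e) : ∃ u v, s = .app u v ∧ u.toDB E = d ∧ v.toDB E = e := by
  rcases s with ((_ | _ | ⟨n, σ⟩) | _ | ⟨u, v⟩) <;> simp only [toDB, reduceCtorEq] at h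
  · split at h <;> simp at h
  · simp only [DB.app.injEq] at h
    exact ⟨u, v, rfl, h⟩

-- The types are compared too: the congruence step for an application needs the argument types
-- to agree.
theorem lamEq_of_toDB_eq (d : DB) {E : List (ℕ × Ty)} {s t : Tm} {σ τ : Ty}
    (hs : s.toDB E = d) (ht : t.toDB E = d) (hsσ : HasTy s σ) (htτ : HasTy t τ) :
    σ = τ ∧ LamEq s t := by
  induction d generalizing E s t σ τ with
  | bvar i =>
    obtain ⟨p, rfl, hp⟩ := eq_vr_of_toDB_eq_bvar hs
    obtain ⟨q, rfl, hq⟩ := eq_vr_of_toDB_eq_bvar ht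
    obtain ⟨_, rfl, -⟩ := List.idxOf?_eq_some_iff.1 hp
    obtain ⟨_, hpq, -⟩ := List.idxOf?_eq_some_iff.1 hq
    rw [hpq] at hsσ ⊢
    exact ⟨hsσ.unique htτ, LamEq.refl htτ⟩
  | fvar p =>
    rw [eq_vr_of_toDB_eq_fvar hs, ← eq_vr_of_toDB_eq_fvar ht] at hsσ ⊢
    exact ⟨hsσ.unique htτ, LamEq.refl htτ⟩
  | bot =>
    rw [eq_bot_of_toDB_eq_bot hs, ← eq_bot_of_toDB_eq_bot ht] at hsσ ⊢
    exact ⟨hsσ.unique htτ, LamEq.refl htτ⟩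
  | imp =>
    rw [eq_imp_of_toDB_eq_imp hs, ← eq_imp_of_toDB_eq_imp ht] at hsσ ⊢
    exact ⟨hsσ.unique htτ, LamEq.refl htτ⟩
  | lam ρ d ih =>
    obtain ⟨n, b, rfl, hb⟩ := eq_lam_of_toDB_eq_lam hs
    obtain ⟨k, c, rfl, hc⟩ := eq_lam_of_toDB_eq_lam ht
    cases hsσ with | lam hbβ =>
    cases htτ with | lam hcγ =>
    obtain ⟨m, hm⟩ := exists_fresh (fv b ∪ fv c) ρ
    rw [Finset.mem_union, not_or] at hm
    have hbm : HasTy (subst b n ρ (vr m ρ)) _ := hasTy_subst hbβ (HasTy.name (.var m ρ))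
    have hcm : HasTy (subst c k ρ (vr m ρ)) _ := hasTy_subst hcγ (HasTy.name (.var m ρ))
    obtain ⟨rfl, hbody⟩ :=
      ih ((toDB_subst_vr hm.1).trans hb) ((toDB_subst_vr hm.2).trans hc) hbm hcm
    refine ⟨rfl, (LamEq.alpha (HasTy.lam hbβ) hm.1).trans ?_⟩
    exact (LamEq.ctx (.lam m ρ .hole) hbody (HasTy.lam hbm)).trans
      (LamEq.alpha (HasTy.lam hcγ) hm.2).symm
  | app d e ihd ihe =>
    obtain ⟨u, v, rfl, hu, hv⟩ := eq_app_of_toDB_eq_app hs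
    obtain ⟨u', v', rfl, hu', hv'⟩ := eq_app_of_toDB_eq_app ht
    cases hsσ with | app huα hvα =>
    cases htτ with | app hu'α hv'α =>
    obtain ⟨harr, hlu⟩ := ihd hu hu' huα hu'α
    obtain ⟨rfl, rfl⟩ := Ty.arrow.inj harr
    refine ⟨rfl, (LamEq.ctx (.appL .hole v) hlu (HasTy.app huα hvα)).trans ?_⟩
    exact LamEq.ctx (.appR u' .hole) (ihe hv hv' hvα hv'α).2 (HasTy.app hu'α hvα)

lemma lamEq_of_toDB_nil_eq {s t : Tm} {σ τ : Ty} (hs : HasTy s σ) (ht : HasTy t τ)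
    (h : s.toDB [] = t.toDB []) : LamEq s t :=
  (lamEq_of_toDB_eq _ h rfl hs ht).2

end Tm

lemma Interp.update_apply_self (J : Interp) (n : ℕ) (σ : Ty) (a : σ.sem) :
    J.update n σ a n σ = a :=
  dif_pos ⟨rfl, rfl⟩

lemma Interp.update_apply_of_ne (J : Interp) {n k : ℕ} {σ τ : Ty} (a : σ.sem)
    (h : (k, τ) ≠ (n, σ)) : J.update n σ a k τ = J k τ :=
  dif_neg fun ⟨hk, hτ⟩ => h (by rw [hk, hτ])

lemma eval_vr (J : Interp) (n : ℕ) (σ : Ty) : eval J (vr n σ) σ = J n σ :=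
  dif_pos rfl

lemma eval_app (J : Interp) {s t : Tm} {σ τ : Ty} (ht : HasTy t τ) :
    eval J (.app s t) σ = eval J s (.arrow τ σ) (eval J t τ) := by
  show (match typeOf t with
    | some τ => eval J s (.arrow τ σ) (eval J t τ)
    | none => default) = _
  rw [typeOf_eq_some ht]

lemma eval_lam (J : Interp) (n : ℕ) (σ τ : Ty) (b : Tm) :
    eval J (.lam n σ b) (.arrow σ τ) = fun a => eval (J.update n σ a) b τ :=
  dif_pos rfl

lemma hasTy_impTm {v w : Tm} (hv : HasTy v .base) (hw : HasTy w .base) :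
    HasTy (impTm v w) .base :=
  HasTy.app (HasTy.app (HasTy.name .imp) hv) hw

lemma hasTy_negTm {v : Tm} (hv : HasTy v .base) : HasTy (negTm v) .base :=
  hasTy_impTm hv (HasTy.name .bot)

lemma ded_negTm_botTm : Ded ∅ (negTm botTm) :=
  Ded.ded (Ded.triv (A := ∅) (by simp) (HasTy.name .bot))

lemma ded_impTm_of_ded_negTm {v w : Tm} (hv : Ded ∅ (negTm v)) (hvt : HasTy v .base)
    (hwt : HasTy w .base) : Ded ∅ (impTm v w) := by
  have hbot : Ded (insert v ∅) botTm := Ded.mp (Ded.weak hvt hv) (Ded.triv (by simp) hvt)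
  exact Ded.ded (Ded.dn (Ded.ded (Ded.weak (hasTy_negTm hwt) hbot)))

lemma ded_impTm_of_ded {v w : Tm} (hw : Ded ∅ w) (hvt : HasTy v .base) : Ded ∅ (impTm v w) :=
  Ded.ded (Ded.weak hvt hw)

lemma ded_negTm_impTm {v w : Tm} (hv : Ded ∅ v) (hw : Ded ∅ (negTm w))
    (hvt : HasTy v .base) (hwt : HasTy w .base) : Ded ∅ (negTm (impTm v w)) := by
  have hvw := hasTy_impTm hvt hwt
  have hw' : Ded (insert (impTm v w) ∅) w := Ded.mp (Ded.triv (by simp) hvw) (Ded.weak hvw hv)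
  exact Ded.ded (Ded.mp (Ded.weak hvw hw) hw')

def Represents : (σ : Ty) → Tm → σ.sem → Prop
  | .base, u, a => HasTy u .base ∧ Ded ∅ (cond a u (negTm u))
  | .arrow σ τ, u, f =>
      HasTy u (.arrow σ τ) ∧ ∀ v a, Represents σ v a → Represents τ (.app u v) (f a)

lemma Represents.hasTy {σ : Ty} {u : Tm} {a : σ.sem} (h : Represents σ u a) : HasTy u σ := by
  cases σ <;> exact h.1

lemma Represents.of_lamEq {σ : Ty} {u u' : Tm} {a : σ.sem} (h : Represents σ u a)
    (huu' : LamEq u u') (hu' : HasTy u' σ) : Represents σ u' a := by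
  induction σ generalizing u u' with
  | base =>
    refine ⟨hu', ?_⟩
    cases a with
    | true => exact Ded.lam h.2 huu' hu'
    | false =>
      exact Ded.lam h.2 (LamEq.ctx (.appL (.appR (.name .imp) .hole) botTm) huu' (hasTy_negTm h.1))
        (hasTy_negTm hu')
  | arrow σ τ _ ihτ =>
    refine ⟨hu', fun v a hv => ihτ (h.2 v a hv) ?_ (HasTy.app hu' hv.hasTy)⟩
    exact LamEq.ctx (.appL .hole v) huu' (HasTy.app h.1 hv.hasTy)

lemma represents_bot : Represents .base botTm false :=
  ⟨HasTy.name .bot, ded_negTm_botTm⟩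

lemma represents_imp :
    Represents (.arrow .base (.arrow .base .base)) (.name .imp) fun a b => !a || b := by
  refine ⟨HasTy.name .imp, fun v a hv =>
    ⟨HasTy.app (HasTy.name .imp) hv.1, fun w c hw => ⟨hasTy_impTm hv.1 hw.1, ?_⟩⟩⟩
  cases a with
  | false => exact ded_impTm_of_ded_negTm hv.2 hv.1 hw.1
  | true =>
    cases c with
    | true => exact ded_impTm_of_ded hw.2 hv.1
    | false => exact ded_negTm_impTm hv.2 hw.2 hv.1 hw.1

lemma lamEq_app_substAux_lam {θ : ℕ × Ty → Tm} {n : ℕ} {σ τ : Ty} {b v : Tm}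
    (hb : HasTy b τ) (hθ : ∀ p ∈ fv (.lam n σ b), HasTy (θ p) p.2) (hv : HasTy v σ) :
    LamEq (.app (substAux θ (.lam n σ b)) v) (substAux (Function.update θ (n, σ) v) b) := by
  set m := freshIdx θ n σ b
  have hbody := hasTy_substAux hb (hasTy_update (w := vr m σ) hθ (HasTy.name _))
  rw [substAux_lam]
  refine (LamEq.beta (HasTy.app (HasTy.lam hbody) hv)).trans
    (Tm.lamEq_of_toDB_nil_eq (hasTy_subst hbody hv) (hasTy_substAux hb (hasTy_update hθ hv)) ?_)
  rw [subst, Tm.toDB_substAux_nil, Tm.toDB_substAux_nil, Tm.toDB_substAux_nil (s := b),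
    DB.subst_subst]
  -- `m` occurs in no `θ p`, so substituting `v` for it only touches the image of `(n, σ)`.
  refine DB.subst_congr fun p hp => ?_
  by_cases hpn : p = (n, σ)
  · subst hpn
    rw [Function.update_self, Function.update_self, Tm.toDB_vr_of_notMem List.not_mem_nil]
    exact congrArg (Tm.toDB []) (Function.update_self ..)
  · rw [Function.update_of_ne hpn, Function.update_of_ne hpn]
    conv_rhs => rw [← DB.subst_fvar ((θ p).toDB [])]
    refine DB.subst_congr fun q hq => ?_
    have hqm : q ≠ (m, σ) := fun h =>
      freshIdx_notMem_fv (Finset.mem_erase.2 ⟨hpn, (Tm.fv_toDB hp).1⟩) (h ▸ (Tm.fv_toDB hq).1)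
    rw [Function.update_of_ne hqm]
    exact Tm.toDB_vr_of_notMem List.not_mem_nil

theorem represents_substAux {s : Tm} {σ : Ty} (hs : HasTy s σ) (θ : ℕ × Ty → Tm)
    (J : Interp) (hθ : ∀ p ∈ fv s, Represents p.2 (θ p) (J p.1 p.2)) :
    Represents σ (substAux θ s) (eval J s σ) := by
  induction hs generalizing θ J with
  | name x =>
    cases x with
    | var n σ =>
      show Represents σ (θ (n, σ)) (eval J (vr n σ) σ)
      rw [eval_vr]
      exact hθ (n, σ) (by simp [fv])
    | bot => exact represents_bot
    | imp => exact represents_imp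
  | app _ hv ihu ihv =>
    rw [eval_app J hv]
    exact (ihu θ J fun p hp => hθ p (by simp [fv, hp])).2 _ _
      (ihv θ J fun p hp => hθ p (by simp [fv, hp]))
  | @lam n σ b τ hb ih =>
    have hθty : ∀ p ∈ fv (.lam n σ b), HasTy (θ p) p.2 := fun p hp => (hθ p hp).hasTy
    have hlam := hasTy_substAux (HasTy.lam hb) hθty
    rw [eval_lam]
    refine ⟨hlam, fun v a hv => ?_⟩
    have hext : ∀ p ∈ fv b,
        Represents p.2 (Function.update θ (n, σ) v p) (J.update n σ a p.1 p.2) := by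
      intro p hp
      by_cases hpn : p = (n, σ)
      · subst hpn
        rw [Function.update_self, Interp.update_apply_self]
        exact hv
      · rw [Function.update_of_ne hpn, Interp.update_apply_of_ne J a hpn]
        exact hθ p (Finset.mem_erase.2 ⟨hpn, hp⟩)
    exact (ih _ _ hext).of_lamEq (lamEq_app_substAux_lam hb hθty hv.hasTy).symm
      (HasTy.app hlam hv.hasTy)

/-- Closed Completeness: every closed valid formula is deducible. -/
theorem closed_completeness (s : Tm) (hty : HasTy s .base) (hclosed : Closed s)
    (hvalid : ValidFml s) : Ded ∅ s := by
  let J : Interp := fun _ _ => default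
  have hfv : fv s = ∅ := hclosed
  have hrep := represents_substAux hty (fun p => vr p.1 p.2) J fun p hp =>
    absurd (hfv ▸ hp) (Finset.notMem_empty p)
  have htrue : eval J s .base = true := hvalid J
  rw [htrue] at hrep
  exact Ded.lam hrep.2 (Tm.lamEq_of_toDB_nil_eq hrep.1 hty (Tm.toDB_substAux_vr s)) hty

end PTT
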